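/- arXiv:math/0209108 — 14 statements merged into one kernel-verified Lean document; each statement's English description precedes it below -/
import Mathlib

section
/- Fix n ≥ 1 and let k be a field in which n·1 is invertible. Let V be the n-dimensional k-vector space with basis v₁, …, vₙ, and let s := Σⱼ vⱼ. Define linear maps Δ_M, Δ̃_M : V → V ⊗ V by Δ_M(vᵢ) = vᵢ ⊗ s and Δ̃_M(vᵢ) = s ⊗ vᵢ (the Markovian coproducts of the (n,1)-De Bruijn graph). Then (V, Δ_M, Δ̃_M) is a coassociative co-dialgebra: Δ_M and Δ̃_M are coassociative, (id ⊗ Δ_M) ∘ Δ_M = (id ⊗ Δ̃_M) ∘ Δ_M, (Δ̃_M ⊗ id) ∘ Δ̃_M = (Δ_M ⊗ id) ∘ Δ̃_M, and (Δ̃_M ⊗ id) ∘ Δ_M = (id ⊗ Δ_M) ∘ Δ̃_M. Moreover, the linear maps ε, ε̃ : V → k with ε(vᵢ) = ε̃(vᵢ) = 1/n are right and left counits: (id ⊗ ε) ∘ Δ_M = id and (ε̃ ⊗ id) ∘ Δ̃_M = id. -/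
open TensorProduct

noncomputable section

variable {k V : Type*} [Field k] [AddCommGroup V] [Module k V]

/-- `(Δ' ⊗ id) ∘ Δ` composed with the standard associator, as a map `V → V ⊗ (V ⊗ V)`. -/
def lcomp (Δ' Δ : V →ₗ[k] V ⊗[k] V) : V →ₗ[k] V ⊗[k] (V ⊗[k] V) :=
  (TensorProduct.assoc k V V V).toLinearMap ∘ₗ TensorProduct.map Δ' LinearMap.id ∘ₗ Δ

/-- `(id ⊗ Δ') ∘ Δ` as a map `V → V ⊗ (V ⊗ V)`. -/
def rcomp (Δ' Δ : V →ₗ[k] V ⊗[k] V) : V →ₗ[k] V ⊗[k] (V ⊗[k] V) :=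
  TensorProduct.map LinearMap.id Δ' ∘ₗ Δ

/-- Coassociativity of a coproduct: `(Δ ⊗ id) ∘ Δ = (id ⊗ Δ) ∘ Δ`. -/
def Coassoc (Δ : V →ₗ[k] V ⊗[k] V) : Prop := lcomp Δ Δ = rcomp Δ Δ

/-- `(D, Δ, Δ̃)` is a coassociative co-dialgebra: both coproducts are coassociative,
`(id ⊗ Δ) ∘ Δ = (id ⊗ Δ̃) ∘ Δ`, `(Δ̃ ⊗ id) ∘ Δ̃ = (Δ ⊗ id) ∘ Δ̃`, and the entanglement
equation `(Δ̃ ⊗ id) ∘ Δ = (id ⊗ Δ) ∘ Δ̃` holds. -/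
def CoDialgebra (Δ Δ' : V →ₗ[k] V ⊗[k] V) : Prop :=
  Coassoc Δ ∧ Coassoc Δ' ∧
  rcomp Δ Δ = rcomp Δ' Δ ∧
  lcomp Δ' Δ' = lcomp Δ Δ' ∧
  lcomp Δ' Δ = rcomp Δ Δ'

/-! With `s = ∑ⱼ vⱼ`, the Markovian coproducts are `x ↦ x ⊗ s` and `x ↦ s ⊗ x` on all of `V`.
For these two maps every co-dialgebra identity holds for an arbitrary `s`, since both sides send
`x` to the same one of `x ⊗ s ⊗ s`, `s ⊗ s ⊗ x`, `s ⊗ x ⊗ s`; and the counit equations only need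
`ε s = 1`, which is where `n⁻¹` comes from. -/

def tmulRight (s : V) : V →ₗ[k] V ⊗[k] V := (TensorProduct.mk k V V).flip s

def tmulLeft (s : V) : V →ₗ[k] V ⊗[k] V := TensorProduct.mk k V V s

@[simp]
lemma tmulRight_apply (s x : V) : tmulRight (k := k) s x = x ⊗ₜ s := rfl

@[simp]
lemma tmulLeft_apply (s x : V) : tmulLeft (k := k) s x = s ⊗ₜ x := rfl

theorem coDialgebra_tmulRight_tmulLeft (s : V) :
    CoDialgebra (tmulRight (k := k) s) (tmulLeft s) := by
  unfold CoDialgebra Coassoc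
  refine ⟨?_, ?_, ?_, ?_, ?_⟩ <;>
  · ext x
    simp [lcomp, rcomp]

lemma rid_comp_map_comp_tmulRight {s : V} {ε : V →ₗ[k] k} (hεs : ε s = 1) :
    (TensorProduct.rid k V).toLinearMap ∘ₗ TensorProduct.map LinearMap.id ε ∘ₗ tmulRight s
      = LinearMap.id := by
  ext x
  simp [hεs]

lemma lid_comp_map_comp_tmulLeft {s : V} {ε : V →ₗ[k] k} (hεs : ε s = 1) :
    (TensorProduct.lid k V).toLinearMap ∘ₗ TensorProduct.map ε LinearMap.id ∘ₗ tmulLeft s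
      = LinearMap.id := by
  ext x
  simp [hεs]

lemma map_sum_eq_one_of_forall_eq_inv_card {ι : Type*} [Fintype ι]
    (hι : (Fintype.card ι : k) ≠ 0) (v : ι → V) (ε : V →ₗ[k] k)
    (hε : ∀ i, ε (v i) = (Fintype.card ι : k)⁻¹) :
    ε (∑ i, v i) = 1 := by
  simp [hε, hι]

theorem stmt3_general (n : ℕ) (k V : Type*) [Field k] [AddCommGroup V] [Module k V]
    (hnk : (n : k) ≠ 0)
    (v : Module.Basis (Fin n) k V)
    (ΔM ΔM' : V →ₗ[k] V ⊗[k] V)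
    (hΔ : ∀ i, ΔM (v i) = v i ⊗ₜ[k] (∑ j, v j))
    (hΔ' : ∀ i, ΔM' (v i) = (∑ j, v j) ⊗ₜ[k] v i)
    (ε ε' : V →ₗ[k] k)
    (hε : ∀ i, ε (v i) = (n : k)⁻¹)
    (hε' : ∀ i, ε' (v i) = (n : k)⁻¹) :
    CoDialgebra ΔM ΔM' ∧
    (TensorProduct.rid k V).toLinearMap ∘ₗ TensorProduct.map LinearMap.id ε ∘ₗ ΔM
      = LinearMap.id ∧
    (TensorProduct.lid k V).toLinearMap ∘ₗ TensorProduct.map ε' LinearMap.id ∘ₗ ΔM'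
      = LinearMap.id := by
  have hΔM : ΔM = tmulRight (∑ j, v j) := v.ext hΔ
  have hΔM' : ΔM' = tmulLeft (∑ j, v j) := v.ext hΔ'
  have hcard : (Fintype.card (Fin n) : k) = n := by rw [Fintype.card_fin]
  have hεs : ε (∑ j, v j) = 1 :=
    map_sum_eq_one_of_forall_eq_inv_card (hcard ▸ hnk) v ε (hcard ▸ hε)
  have hε's : ε' (∑ j, v j) = 1 :=
    map_sum_eq_one_of_forall_eq_inv_card (hcard ▸ hnk) v ε' (hcard ▸ hε')
  subst hΔM hΔM'
  exact ⟨coDialgebra_tmulRight_tmulLeft _, rid_comp_map_comp_tmulRight hεs,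
    lid_comp_map_comp_tmulLeft hε's⟩

/-- The Markovian coproducts `Δ_M(vᵢ) = vᵢ ⊗ Σⱼ vⱼ` and `Δ̃_M(vᵢ) = (Σⱼ vⱼ) ⊗ vᵢ`
of the `(n,1)`-De Bruijn graph make `V` a coassociative co-dialgebra, with right and left
counits `ε(vᵢ) = ε̃(vᵢ) = 1/n`. -/
theorem stmt3 (n : ℕ) (hn : 1 ≤ n) (k V : Type*) [Field k] [AddCommGroup V] [Module k V]
    (hnk : (n : k) ≠ 0)
    (v : Module.Basis (Fin n) k V)
    (ΔM ΔM' : V →ₗ[k] V ⊗[k] V)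
    (hΔ : ∀ i, ΔM (v i) = v i ⊗ₜ[k] (∑ j, v j))
    (hΔ' : ∀ i, ΔM' (v i) = (∑ j, v j) ⊗ₜ[k] v i)
    (ε ε' : V →ₗ[k] k)
    (hε : ∀ i, ε (v i) = (n : k)⁻¹)
    (hε' : ∀ i, ε' (v i) = (n : k)⁻¹) :
    CoDialgebra ΔM ΔM' ∧
    (TensorProduct.rid k V).toLinearMap ∘ₗ TensorProduct.map LinearMap.id ε ∘ₗ ΔM
      = LinearMap.id ∧
    (TensorProduct.lid k V).toLinearMap ∘ₗ TensorProduct.map ε' LinearMap.id ∘ₗ ΔM'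
      = LinearMap.id :=
  stmt3_general n k V hnk v ΔM ΔM' hΔ hΔ' ε ε' hε hε'
end
end

section
/- Let k be a field, let B be a k-vector space with linear maps Δ, Δ̃ : B → B ⊗ B making (B, Δ, Δ̃) a coassociative co-dialgebra, and let (C, Δ_C) be a coassociative coalgebra over k. Define δ_{B⊗C} := (id ⊗ τ ⊗ id) ∘ (Δ ⊗ Δ_C) and δ̃_{B⊗C} := (id ⊗ τ ⊗ id) ∘ (Δ̃ ⊗ Δ_C), both maps B ⊗ C → (B ⊗ C) ⊗ (B ⊗ C), where τ is the transposition x ⊗ y ↦ y ⊗ x. Then (B ⊗ C, δ_{B⊗C}, δ̃_{B⊗C}) is a coassociative co-dialgebra. -/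
open TensorProduct

noncomputable section

variable {k V : Type*} [Field k] [AddCommGroup V] [Module k V]

/-- The coproduct `(id ⊗ τ ⊗ id) ∘ (Δ ⊗ Δ_C)` on `B ⊗ C`, where `τ` is the transposition. -/
def prodCop {k B C : Type*} [Field k] [AddCommGroup B] [Module k B]
    [AddCommGroup C] [Module k C]
    (Δ : B →ₗ[k] B ⊗[k] B) (ΔC : C →ₗ[k] C ⊗[k] C) :
    B ⊗[k] C →ₗ[k] (B ⊗[k] C) ⊗[k] (B ⊗[k] C) :=
  (TensorProduct.tensorTensorTensorComm k B B C C).toLinearMap ∘ₗ TensorProduct.map Δ ΔC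


section Key

variable {B C : Type*} [AddCommGroup B] [Module k B] [AddCommGroup C] [Module k C]

/-- The structural rearrangement `(B ⊗ (B⊗B)) ⊗ (C ⊗ (C⊗C)) → (B⊗C) ⊗ ((B⊗C)⊗(B⊗C))`. -/
def Emap (k B C : Type*) [Field k] [AddCommGroup B] [Module k B]
    [AddCommGroup C] [Module k C] :
    (B ⊗[k] (B ⊗[k] B)) ⊗[k] (C ⊗[k] (C ⊗[k] C)) →ₗ[k]
      (B ⊗[k] C) ⊗[k] ((B ⊗[k] C) ⊗[k] (B ⊗[k] C)) :=
  TensorProduct.map LinearMap.id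
      (TensorProduct.tensorTensorTensorComm k B B C C).toLinearMap ∘ₗ
    (TensorProduct.tensorTensorTensorComm k B (B ⊗[k] B) C (C ⊗[k] C)).toLinearMap

lemma inner_l (u : B ⊗[k] B) (w : C ⊗[k] C) (b2 : B) (c2 : C) :
    (TensorProduct.assoc k (B ⊗[k] C) (B ⊗[k] C) (B ⊗[k] C))
        ((TensorProduct.tensorTensorTensorComm k B B C C) (u ⊗ₜ[k] w) ⊗ₜ[k] (b2 ⊗ₜ[k] c2))
      = Emap k B C
          ((TensorProduct.assoc k B B B) (u ⊗ₜ[k] b2) ⊗ₜ[k]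
            (TensorProduct.assoc k C C C) (w ⊗ₜ[k] c2)) := by
  induction u using TensorProduct.induction_on with
  | zero => simp
  | add u1 u2 h1 h2 => simp_all [add_tmul, tmul_add]
  | tmul a a' =>
    induction w using TensorProduct.induction_on with
    | zero => simp
    | add w1 w2 h1 h2 => simp_all [add_tmul, tmul_add]
    | tmul d d' => simp [Emap]

lemma inner_r (u : B ⊗[k] B) (w : C ⊗[k] C) (b1 : B) (c1 : C) :
    (b1 ⊗ₜ[k] c1) ⊗ₜ[k] (TensorProduct.tensorTensorTensorComm k B B C C) (u ⊗ₜ[k] w)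
      = Emap k B C ((b1 ⊗ₜ[k] u) ⊗ₜ[k] (c1 ⊗ₜ[k] w)) := by
  induction u using TensorProduct.induction_on with
  | zero => simp
  | add u1 u2 h1 h2 => simp_all [add_tmul, tmul_add]
  | tmul a a' =>
    induction w using TensorProduct.induction_on with
    | zero => simp
    | add w1 w2 h1 h2 => simp_all [add_tmul, tmul_add]
    | tmul d d' => simp [Emap]

lemma key_l (Δ₁ Δ₂ : B →ₗ[k] B ⊗[k] B) (ΔC₁ ΔC₂ : C →ₗ[k] C ⊗[k] C) :
    lcomp (prodCop Δ₁ ΔC₁) (prodCop Δ₂ ΔC₂)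
      = Emap k B C ∘ₗ TensorProduct.map (lcomp Δ₁ Δ₂) (lcomp ΔC₁ ΔC₂) := by
  apply TensorProduct.ext'
  intro b c
  simp only [lcomp, prodCop, LinearMap.comp_apply, TensorProduct.map_tmul]
  generalize Δ₂ b = x
  generalize ΔC₂ c = y
  induction x using TensorProduct.induction_on with
  | zero => simp
  | add u v hu hv => simp_all [add_tmul]
  | tmul b1 b2 =>
    induction y using TensorProduct.induction_on with
    | zero => simp
    | add u v hu hv => simp_all [tmul_add]
    | tmul c1 c2 =>
      simp only [TensorProduct.tensorTensorTensorComm_tmul, TensorProduct.map_tmul,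
        LinearMap.comp_apply, LinearMap.id_coe, id_eq]
      exact inner_l (Δ₁ b1) (ΔC₁ c1) b2 c2

lemma key_r (Δ₁ Δ₂ : B →ₗ[k] B ⊗[k] B) (ΔC₁ ΔC₂ : C →ₗ[k] C ⊗[k] C) :
    rcomp (prodCop Δ₁ ΔC₁) (prodCop Δ₂ ΔC₂)
      = Emap k B C ∘ₗ TensorProduct.map (rcomp Δ₁ Δ₂) (rcomp ΔC₁ ΔC₂) := by
  apply TensorProduct.ext'
  intro b c
  simp only [rcomp, prodCop, LinearMap.comp_apply, TensorProduct.map_tmul]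
  generalize Δ₂ b = x
  generalize ΔC₂ c = y
  induction x using TensorProduct.induction_on with
  | zero => simp
  | add u v hu hv => simp_all [add_tmul]
  | tmul b1 b2 =>
    induction y using TensorProduct.induction_on with
    | zero => simp
    | add u v hu hv => simp_all [tmul_add]
    | tmul c1 c2 =>
      simp only [TensorProduct.tensorTensorTensorComm_tmul, TensorProduct.map_tmul,
        LinearMap.comp_apply, LinearMap.id_coe, id_eq]
      exact inner_r (Δ₁ b2) (ΔC₁ c2) b1 c1

end Key

/-- If `(B, Δ, Δ̃)` is a coassociative co-dialgebra and `(C, Δ_C)` a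
coassociative coalgebra, then `(B ⊗ C, (id ⊗ τ ⊗ id) ∘ (Δ ⊗ Δ_C), (id ⊗ τ ⊗ id) ∘ (Δ̃ ⊗ Δ_C))`
is a coassociative co-dialgebra. -/
theorem stmt5 (k B C : Type*) [Field k] [AddCommGroup B] [Module k B]
    [AddCommGroup C] [Module k C]
    (Δ Δ' : B →ₗ[k] B ⊗[k] B) (hB : CoDialgebra Δ Δ')
    (ΔC : C →ₗ[k] C ⊗[k] C) (hC : Coassoc ΔC) :
    CoDialgebra (prodCop Δ ΔC) (prodCop Δ' ΔC) := by
  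
  obtain ⟨h1, h2, h3, h4, h5⟩ := hB
  refine ⟨?_, ?_, ?_, ?_, ?_⟩
  · rw [Coassoc, key_l, key_r, h1, hC]
  · rw [Coassoc, key_l, key_r, h2, hC]
  · rw [key_r, key_r, h3]
  · rw [key_l, key_l, h4]
  · rw [key_l, key_r, h5, hC]
end
end

section
/- Let m, n ≥ 1 and let k be a field. Let D be the (m+n)-dimensional k-vector space with basis x₁, …, x_m, α₁, …, αₙ. Define linear maps Δ, Δ̃ : D → D ⊗ D by Δ(xᵢ) = Σ_{j=1}^n xᵢ ⊗ αⱼ, Δ̃(xᵢ) = Σ_{j=1}^n αⱼ ⊗ xᵢ, Δ(αⱼ) = Σ_{p=1}^n αⱼ ⊗ α_p, and Δ̃(αⱼ) = Σ_{p=1}^n α_p ⊗ αⱼ. Then (D, Δ, Δ̃) is a coassociative co-dialgebra. -/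
/-
Both coproducts tensor with the single vector `a = α₁ + ⋯ + αₙ`: on the basis, and hence
everywhere, `Δ v = v ⊗ a` and `Δ̃ v = a ⊗ v`. For any vector `a` whatsoever, each of the five
co-dialgebra identities then sends `v` to one of `v ⊗ a ⊗ a`, `a ⊗ v ⊗ a`, `a ⊗ a ⊗ v` on both sides.
-/

open TensorProduct

noncomputable section

variable {k V : Type*} [Field k] [AddCommGroup V] [Module k V]

theorem coDialgebra_flip_mk_mk (a : V) :
    CoDialgebra ((TensorProduct.mk k V V).flip a) (TensorProduct.mk k V V a) := by
  refine ⟨?_, ?_, ?_, ?_, ?_⟩ <;> ext v <;> rfl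

theorem stmt6_general (m n : ℕ)
    (k D : Type*) [Field k] [AddCommGroup D] [Module k D]
    (b : Module.Basis (Fin m ⊕ Fin n) k D)
    (Δ Δ' : D →ₗ[k] D ⊗[k] D)
    (hΔx : ∀ i : Fin m, Δ (b (Sum.inl i)) = ∑ j : Fin n, b (Sum.inl i) ⊗ₜ[k] b (Sum.inr j))
    (hΔ'x : ∀ i : Fin m, Δ' (b (Sum.inl i)) = ∑ j : Fin n, b (Sum.inr j) ⊗ₜ[k] b (Sum.inl i))
    (hΔα : ∀ j : Fin n, Δ (b (Sum.inr j)) = ∑ p : Fin n, b (Sum.inr j) ⊗ₜ[k] b (Sum.inr p))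
    (hΔ'α : ∀ j : Fin n, Δ' (b (Sum.inr j)) = ∑ p : Fin n, b (Sum.inr p) ⊗ₜ[k] b (Sum.inr j)) :
    CoDialgebra Δ Δ' := by
  set a := ∑ j : Fin n, b (Sum.inr j)
  have hΔ : Δ = (TensorProduct.mk k D D).flip a :=
    b.ext <| by rintro (i | j) <;> simp [a, hΔx, hΔα]
  have hΔ' : Δ' = TensorProduct.mk k D D a :=
    b.ext <| by rintro (i | j) <;> simp [a, hΔ'x, hΔ'α]
  rw [hΔ, hΔ']
  exact coDialgebra_flip_mk_mk a

/-- On the `(m+n)`-dimensional space with basis `x₁, …, x_m, α₁, …, αₙ`, the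
Markovian coproducts `Δ(xᵢ) = Σⱼ xᵢ ⊗ αⱼ`, `Δ̃(xᵢ) = Σⱼ αⱼ ⊗ xᵢ`, `Δ(αⱼ) = Σ_p αⱼ ⊗ α_p`,
`Δ̃(αⱼ) = Σ_p α_p ⊗ αⱼ` make `D` a coassociative co-dialgebra. -/
theorem stmt6 (m n : ℕ) (hm : 1 ≤ m) (hn : 1 ≤ n)
    (k D : Type*) [Field k] [AddCommGroup D] [Module k D]
    (b : Module.Basis (Fin m ⊕ Fin n) k D)
    (Δ Δ' : D →ₗ[k] D ⊗[k] D)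
    (hΔx : ∀ i : Fin m, Δ (b (Sum.inl i)) = ∑ j : Fin n, b (Sum.inl i) ⊗ₜ[k] b (Sum.inr j))
    (hΔ'x : ∀ i : Fin m, Δ' (b (Sum.inl i)) = ∑ j : Fin n, b (Sum.inr j) ⊗ₜ[k] b (Sum.inl i))
    (hΔα : ∀ j : Fin n, Δ (b (Sum.inr j)) = ∑ p : Fin n, b (Sum.inr j) ⊗ₜ[k] b (Sum.inr p))
    (hΔ'α : ∀ j : Fin n, Δ' (b (Sum.inr j)) = ∑ p : Fin n, b (Sum.inr p) ⊗ₜ[k] b (Sum.inr j)) :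
    CoDialgebra Δ Δ' :=
  stmt6_general m n k D b Δ Δ' hΔx hΔ'x hΔα hΔ'α
end
end

section
/- Let k be a field, let (D, Δ, Δ̃) be a coassociative co-dialgebra over k, and let A be an associative k-algebra with multiplication m. On the space L(D, A) of k-linear maps from D to A, define two convolution products by f ⊣ g := m ∘ (f ⊗ g) ∘ Δ and f ⊢ g := m ∘ (f ⊗ g) ∘ Δ̃. Then (L(D, A), ⊣, ⊢) is an associative dialgebra: ⊣ and ⊢ are associative, and for all f, g, h ∈ L(D, A): f ⊣ (g ⊣ h) = f ⊣ (g ⊢ h), (f ⊢ g) ⊣ h = f ⊢ (g ⊣ h), and (f ⊣ g) ⊢ h = (f ⊢ g) ⊢ h. -/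
open TensorProduct

noncomputable section

variable {k V : Type*} [Field k] [AddCommGroup V] [Module k V]

/-- The convolution product `f * g := m ∘ (f ⊗ g) ∘ Δ` on linear maps `D → A`. -/
def conv {k D A : Type*} [Field k] [AddCommGroup D] [Module k D] [Ring A] [Algebra k A]
    (Δ : D →ₗ[k] D ⊗[k] D) (f g : D →ₗ[k] A) : D →ₗ[k] A :=
  LinearMap.mul' k A ∘ₗ TensorProduct.map f g ∘ₗ Δ

section Aux

variable {k D A : Type*} [Field k] [AddCommGroup D] [Module k D] [Ring A] [Algebra k A]

/-- The threefold product `a ⊗ (b ⊗ c) ↦ f a * (g b * h c)`. -/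
def trip (f g h : D →ₗ[k] A) : D ⊗[k] (D ⊗[k] D) →ₗ[k] A :=
  LinearMap.mul' k A ∘ₗ
    TensorProduct.map f (LinearMap.mul' k A ∘ₗ TensorProduct.map g h)

lemma trip_tmul (f g h : D →ₗ[k] A) (a b c : D) :
    trip f g h (a ⊗ₜ (b ⊗ₜ c)) = f a * (g b * h c) := by
  simp [trip]

lemma conv_def (Δ : D →ₗ[k] D ⊗[k] D) (f g : D →ₗ[k] A) :
    conv Δ f g = (LinearMap.mul' k A ∘ₗ TensorProduct.map f g) ∘ₗ Δ := by
  rw [conv, LinearMap.comp_assoc]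

lemma conv_left (Δ Δ₁ : D →ₗ[k] D ⊗[k] D) (f g h : D →ₗ[k] A) :
    conv Δ (conv Δ₁ f g) h = trip f g h ∘ₗ lcomp Δ₁ Δ := by
  have : (LinearMap.mul' k A ∘ₗ TensorProduct.map (conv Δ₁ f g) h) =
      trip f g h ∘ₗ (TensorProduct.assoc k D D D).toLinearMap ∘ₗ
        TensorProduct.map Δ₁ LinearMap.id := by
    apply TensorProduct.ext'
    intro x y
    simp only [LinearMap.comp_apply, TensorProduct.map_tmul, LinearMap.id_coe, id_eq, conv]
    induction Δ₁ x using TensorProduct.induction_on with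
    | zero => simp
    | tmul a b => simp [trip, mul_assoc]
    | add s t hs ht => simp_all [TensorProduct.add_tmul, add_mul]
  rw [conv_def, this, lcomp]
  simp [LinearMap.comp_assoc]

lemma conv_right (Δ Δ₁ : D →ₗ[k] D ⊗[k] D) (f g h : D →ₗ[k] A) :
    conv Δ f (conv Δ₁ g h) = trip f g h ∘ₗ rcomp Δ₁ Δ := by
  have : (LinearMap.mul' k A ∘ₗ TensorProduct.map f (conv Δ₁ g h)) =
      trip f g h ∘ₗ TensorProduct.map LinearMap.id Δ₁ := by
    apply TensorProduct.ext'
    intro x y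
    simp only [LinearMap.comp_apply, TensorProduct.map_tmul, LinearMap.id_coe, id_eq, conv]
    induction Δ₁ y using TensorProduct.induction_on with
    | zero => simp [trip]
    | tmul a b => simp [trip]
    | add s t hs ht => simp_all [TensorProduct.tmul_add, mul_add]
  rw [conv_def, this, rcomp]
  simp [LinearMap.comp_assoc]

end Aux

/-- If `(D, Δ, Δ̃)` is a coassociative co-dialgebra and `A` an associative
algebra with multiplication `m`, the convolution products `f ⊣ g := m ∘ (f ⊗ g) ∘ Δ` and
`f ⊢ g := m ∘ (f ⊗ g) ∘ Δ̃` make `L(D, A)` an associative dialgebra. -/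
theorem stmt7 (k D A : Type*) [Field k] [AddCommGroup D] [Module k D] [Ring A] [Algebra k A]
    (Δ Δ' : D →ₗ[k] D ⊗[k] D) (hD : CoDialgebra Δ Δ') :
    (∀ f g h : D →ₗ[k] A, conv Δ (conv Δ f g) h = conv Δ f (conv Δ g h)) ∧
    (∀ f g h : D →ₗ[k] A, conv Δ' (conv Δ' f g) h = conv Δ' f (conv Δ' g h)) ∧
    (∀ f g h : D →ₗ[k] A, conv Δ f (conv Δ g h) = conv Δ f (conv Δ' g h)) ∧
    (∀ f g h : D →ₗ[k] A, conv Δ (conv Δ' f g) h = conv Δ' f (conv Δ g h)) ∧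
    (∀ f g h : D →ₗ[k] A, conv Δ' (conv Δ f g) h = conv Δ' (conv Δ' f g) h) := by
  obtain ⟨h1, h2, h3, h4, h5⟩ := hD
  refine ⟨fun f g h => ?_, fun f g h => ?_, fun f g h => ?_, fun f g h => ?_, fun f g h => ?_⟩
  · rw [conv_left, conv_right, h1]
  · rw [conv_left, conv_right, h2]
  · rw [conv_right, conv_right, h3]
  · rw [conv_left, conv_right, h5]
  · rw [conv_left, conv_left, ← h4]
end
end

section
/- Let k be a field and η ∈ k with η ≠ 0. Let A be the associative unital k-algebra generated by X and Y subject to the single relation XY = η·YX (the quotient of the free algebra k⟨X, Y⟩ by the two-sided ideal generated by XY − η·YX). Set ā = X², b̄ = XY, c̄ = YX, d̄ = Y². Then in A: āb̄ = η²·b̄ā, c̄b̄ = b̄c̄, āc̄ = η²·c̄ā, ād̄ = η²·b̄c̄, b̄d̄ = η²·d̄b̄, c̄d̄ = η²·d̄c̄, and ād̄ − d̄ā = (η² − η⁻²)·b̄c̄. -/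
noncomputable section

/-- The relation `X·Y = η·(Y·X)` on the free algebra `k⟨X, Y⟩` (with `X := ι true`,
`Y := ι false`); quotienting by it is the quotient by the two-sided ideal generated
by `XY − η·YX`. -/
inductive EtaRel (k : Type*) [Field k] (η : k) :
    FreeAlgebra k Bool → FreeAlgebra k Bool → Prop
  | rel : EtaRel k η (FreeAlgebra.ι k true * FreeAlgebra.ι k false)
      (η • (FreeAlgebra.ι k false * FreeAlgebra.ι k true))

/-- In the algebra `A = k⟨X, Y⟩/(XY − η·YX)`, setting `ā = X²`, `b̄ = XY`,
`c̄ = YX`, `d̄ = Y²`, one has `āb̄ = η²b̄ā`, `c̄b̄ = b̄c̄`, `āc̄ = η²c̄ā`, `ād̄ = η²b̄c̄`,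
`b̄d̄ = η²d̄b̄`, `c̄d̄ = η²d̄c̄`, and `ād̄ − d̄ā = (η² − η⁻²)·b̄c̄`. -/
theorem stmt8 (k : Type*) [Field k] (η : k) (hη : η ≠ 0)
    (X Y : RingQuot (EtaRel k η))
    (hX : X = RingQuot.mkAlgHom k (EtaRel k η) (FreeAlgebra.ι k true))
    (hY : Y = RingQuot.mkAlgHom k (EtaRel k η) (FreeAlgebra.ι k false))
    (abar bbar cbar dbar : RingQuot (EtaRel k η))
    (ha : abar = X * X) (hb : bbar = X * Y) (hc : cbar = Y * X) (hd : dbar = Y * Y) :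
    abar * bbar = η ^ 2 • (bbar * abar) ∧
    cbar * bbar = bbar * cbar ∧
    abar * cbar = η ^ 2 • (cbar * abar) ∧
    abar * dbar = η ^ 2 • (bbar * cbar) ∧
    bbar * dbar = η ^ 2 • (dbar * bbar) ∧
    cbar * dbar = η ^ 2 • (dbar * cbar) ∧
    abar * dbar - dbar * abar = (η ^ 2 - η⁻¹ ^ 2) • (bbar * cbar) := by
  subst hX hY ha hb hc hd
  have h : RingQuot.mkAlgHom k (EtaRel k η) (FreeAlgebra.ι k true) *
      RingQuot.mkAlgHom k (EtaRel k η) (FreeAlgebra.ι k false) =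
      η • (RingQuot.mkAlgHom k (EtaRel k η) (FreeAlgebra.ι k false) *
      RingQuot.mkAlgHom k (EtaRel k η) (FreeAlgebra.ι k true)) := by
    have := RingQuot.mkAlgHom_rel k (EtaRel.rel (k := k) (η := η))
    simpa [map_mul] using this
  set x := RingQuot.mkAlgHom k (EtaRel k η) (FreeAlgebra.ι k true) with hx
  set y := RingQuot.mkAlgHom k (EtaRel k η) (FreeAlgebra.ι k false) with hy
  have hz : ∀ z, x * (y * z) = η • (y * (x * z)) := fun z => by
    rw [← mul_assoc, h, smul_mul_assoc, mul_assoc]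
  refine ⟨?_, ?_, ?_, ?_, ?_, ?_, ?_⟩ <;>
    simp only [mul_assoc, h, hz, smul_mul_assoc, mul_smul_comm, smul_smul, sub_smul] <;>
    match_scalars <;> field_simp <;> ring
end
end

section
/- Let k be a field and let F be the 4-dimensional k-vector space with basis {a, b, c, d}, with right coproduct Δ given by Δa = a⊗a + b⊗c, Δb = a⊗b + b⊗d, Δc = d⊗c + c⊗a, Δd = d⊗d + c⊗b, and left coproduct Δ̃ given by Δ̃a = b⊗a + a⊗c, Δ̃b = b⊗b + a⊗d, Δ̃c = c⊗c + d⊗a, Δ̃d = c⊗d + d⊗b. Then: (1) Δ̃ is coassociative; (2) the entanglement equation (Δ̃ ⊗ id) ∘ Δ = (id ⊗ Δ) ∘ Δ̃ holds; (3) also (Δ ⊗ id) ∘ Δ̃ = (id ⊗ Δ̃) ∘ Δ holds (so (F, Δ, Δ̃) is an achiral coassociative L-coalgebra); and (4) the linear map ε̃ : F → k with ε̃(a) = ε̃(d) = 0 and ε̃(b) = ε̃(c) = 1 is a counit for Δ̃: (ε̃ ⊗ id) ∘ Δ̃ = id = (id ⊗ ε̃) ∘ Δ̃. -/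
/-!
Write `a, b, c, d` as `e₀₀, e₀₁, e₁₀, e₁₁`. Then `Δ eᵢⱼ = ∑ₗ eᵢₗ ⊗ eₗⱼ` is the comultiplication
of the matrix coalgebra, with counit `ε eᵢⱼ = δᵢⱼ`, and `Δ̃ = (σ ⊗ id) ∘ Δ` is its twist by the
column swap `σ eᵢⱼ = eᵢ,₁₋ⱼ`. Since `Δ ∘ σ = (id ⊗ σ) ∘ Δ`, every twisted identity is `σ` (applied
in one or two tensor factors) composed with the coassociativity of `Δ`, and `ε̃ = ε ∘ σ⁻¹` is a
counit of the twist.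
-/

open TensorProduct

noncomputable section

variable {k V : Type*} [Field k] [AddCommGroup V] [Module k V]

lemma lcomp_map_comp (Δ' Δ : V →ₗ[k] V ⊗[k] V) (f g : V →ₗ[k] V) :
    lcomp (map f g ∘ₗ Δ') Δ = map f (map g LinearMap.id) ∘ₗ lcomp Δ' Δ := by
  ext x
  simp only [lcomp, LinearMap.comp_apply, LinearEquiv.coe_coe, map_map_assoc, map_map,
    LinearMap.id_comp]

lemma lcomp_comp_map (Δ' Δ : V →ₗ[k] V ⊗[k] V) (f : V →ₗ[k] V) :
    lcomp Δ' (map f LinearMap.id ∘ₗ Δ) = lcomp (Δ' ∘ₗ f) Δ := by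
  ext x
  simp only [lcomp, LinearMap.comp_apply, map_map, LinearMap.id_comp]

lemma rcomp_map_comp (Δ' Δ : V →ₗ[k] V ⊗[k] V) (f g : V →ₗ[k] V) :
    rcomp (map f g ∘ₗ Δ') Δ = map LinearMap.id (map f g) ∘ₗ rcomp Δ' Δ := by
  ext x
  simp only [rcomp, LinearMap.comp_apply, map_map, LinearMap.id_comp]

lemma rcomp_comp_map (Δ' Δ : V →ₗ[k] V ⊗[k] V) (f : V →ₗ[k] V) :
    rcomp Δ' (map f LinearMap.id ∘ₗ Δ) = map f LinearMap.id ∘ₗ rcomp Δ' Δ := by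
  ext x
  simp only [rcomp, LinearMap.comp_apply, map_map, LinearMap.id_comp, LinearMap.comp_id]

def twist (σ : V →ₗ[k] V) (Δ : V →ₗ[k] V ⊗[k] V) : V →ₗ[k] V ⊗[k] V :=
  map σ LinearMap.id ∘ₗ Δ

section Twist

variable {Δ : V →ₗ[k] V ⊗[k] V}

theorem Coassoc.coassoc_twist {σ : V →ₗ[k] V} (hΔ : Coassoc Δ)
    (hσ : Δ ∘ₗ σ = map LinearMap.id σ ∘ₗ Δ) : Coassoc (twist σ Δ) := by
  have hσΔ : twist σ Δ ∘ₗ σ = map σ σ ∘ₗ Δ := by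
    rw [twist, LinearMap.comp_assoc, hσ, ← LinearMap.comp_assoc, ← map_comp,
      LinearMap.id_comp, LinearMap.comp_id]
  calc lcomp (twist σ Δ) (twist σ Δ)
      = lcomp (map σ σ ∘ₗ Δ) Δ := by rw [twist, lcomp_comp_map, ← twist, hσΔ]
    _ = map σ (map σ LinearMap.id) ∘ₗ rcomp Δ Δ := by rw [lcomp_map_comp, hΔ]
    _ = rcomp (twist σ Δ) (twist σ Δ) := by
      rw [twist, rcomp_comp_map, rcomp_map_comp, ← LinearMap.comp_assoc, ← map_comp,
        LinearMap.id_comp, LinearMap.comp_id]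

theorem Coassoc.entanglement_twist (hΔ : Coassoc Δ) (σ : V →ₗ[k] V) :
    lcomp (twist σ Δ) Δ = rcomp Δ (twist σ Δ) := by
  rw [twist, lcomp_map_comp, rcomp_comp_map, map_id, hΔ]

theorem Coassoc.achiral_twist {σ : V →ₗ[k] V} (hΔ : Coassoc Δ)
    (hσ : Δ ∘ₗ σ = map LinearMap.id σ ∘ₗ Δ) :
    lcomp Δ (twist σ Δ) = rcomp (twist σ Δ) Δ := by
  rw [twist, lcomp_comp_map, hσ, lcomp_map_comp, rcomp_map_comp, hΔ]

theorem lid_comp_map_twist (σ : V ≃ₗ[k] V) {ε : V →ₗ[k] k}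
    (hε : (TensorProduct.lid k V).toLinearMap ∘ₗ map ε LinearMap.id ∘ₗ Δ = LinearMap.id) :
    (TensorProduct.lid k V).toLinearMap ∘ₗ map (ε ∘ₗ σ.symm.toLinearMap) LinearMap.id ∘ₗ
      twist σ.toLinearMap Δ = LinearMap.id := by
  rw [twist, ← LinearMap.comp_assoc Δ, ← map_comp, LinearMap.comp_assoc, σ.symm_comp,
    LinearMap.comp_id, LinearMap.id_comp, hε]

theorem rid_comp_map_twist (σ : V ≃ₗ[k] V) {ε : V →ₗ[k] k}
    (hσ : Δ ∘ₗ σ.toLinearMap = map LinearMap.id σ.toLinearMap ∘ₗ Δ)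
    (hε : (TensorProduct.rid k V).toLinearMap ∘ₗ map LinearMap.id ε ∘ₗ Δ = LinearMap.id) :
    (TensorProduct.rid k V).toLinearMap ∘ₗ map LinearMap.id (ε ∘ₗ σ.symm.toLinearMap) ∘ₗ
      twist σ.toLinearMap Δ = LinearMap.id := by
  ext x
  obtain ⟨y, rfl⟩ := σ.surjective x
  have hy := congr($hε y)
  have hσy := congr($hσ y)
  simp only [twist, LinearMap.comp_apply, LinearEquiv.coe_coe, LinearMap.id_apply] at hy hσy ⊢
  simp only [hσy, map_map, LinearMap.comp_id, LinearMap.id_comp, LinearMap.comp_assoc,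
    σ.symm_comp]
  simpa only [LinearMap.comp_apply, LinearEquiv.coe_coe, hy] using
    congr($(CoassocSimps.rid_comp_map σ.toLinearMap ε) (Δ y))

end Twist

section MatrixCoalgebra

variable {n : Type*} (e : Module.Basis (n × n) k V)

def IsMatrixComul [Fintype n] (Δ : V →ₗ[k] V ⊗[k] V) : Prop :=
  ∀ i j, Δ (e (i, j)) = ∑ l, e (i, l) ⊗ₜ[k] e (l, j)

def Module.Basis.diagSum [Fintype n] : V →ₗ[k] k := ∑ i, e.coord (i, i)

@[simp]
theorem Module.Basis.diagSum_apply [Fintype n] [DecidableEq n] (i j : n) :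
    e.diagSum (e (i, j)) = if i = j then 1 else 0 := by
  rcases eq_or_ne i j with rfl | hij
  · simp [Module.Basis.diagSum, Finsupp.single_apply]
  · simp only [Module.Basis.diagSum, LinearMap.coe_sum, Finset.sum_apply,
      Module.Basis.coord_apply, Module.Basis.repr_self, hij, if_false]
    exact Finset.sum_eq_zero fun l _ => Finsupp.single_eq_of_ne fun h =>
      hij ((Prod.mk.inj h).1.symm.trans (Prod.mk.inj h).2)

def Module.Basis.permCols (τ : Equiv.Perm n) : V ≃ₗ[k] V :=
  e.equiv e (Equiv.prodCongr (Equiv.refl n) τ)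

@[simp]
theorem Module.Basis.permCols_symm (τ : Equiv.Perm n) :
    (e.permCols τ).symm = e.permCols τ.symm := by
  simp [Module.Basis.permCols, Module.Basis.equiv_symm]

@[simp]
theorem Module.Basis.permCols_apply (τ : Equiv.Perm n) (i j : n) :
    e.permCols τ (e (i, j)) = e (i, τ j) := by
  simp [Module.Basis.permCols]

namespace IsMatrixComul

variable {e} [Fintype n] {Δ : V →ₗ[k] V ⊗[k] V}

theorem coassoc (hΔ : IsMatrixComul e Δ) : Coassoc Δ := by
  refine e.ext fun ⟨i, j⟩ => ?_
  simp only [lcomp, rcomp, LinearMap.comp_apply, hΔ _ _, map_sum, map_tmul, LinearMap.id_apply,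
    sum_tmul, tmul_sum, LinearEquiv.coe_coe, assoc_tmul]
  exact Finset.sum_comm

theorem lid_comp_diagSum [DecidableEq n] (hΔ : IsMatrixComul e Δ) :
    (TensorProduct.lid k V).toLinearMap ∘ₗ map e.diagSum LinearMap.id ∘ₗ Δ = LinearMap.id :=
  e.ext fun ⟨i, j⟩ => by simp [hΔ _ _]

theorem rid_comp_diagSum [DecidableEq n] (hΔ : IsMatrixComul e Δ) :
    (TensorProduct.rid k V).toLinearMap ∘ₗ map LinearMap.id e.diagSum ∘ₗ Δ = LinearMap.id :=
  e.ext fun ⟨i, j⟩ => by simp [hΔ _ _]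

theorem comp_permCols (hΔ : IsMatrixComul e Δ) (τ : Equiv.Perm n) :
    Δ ∘ₗ (e.permCols τ).toLinearMap = map LinearMap.id (e.permCols τ).toLinearMap ∘ₗ Δ :=
  e.ext fun ⟨i, j⟩ => by simp [hΔ _ _]

end IsMatrixComul

end MatrixCoalgebra

/-- For the 4-dimensional space `F` with basis `{a, b, c, d}` and the right
coproduct `Δ` (from the line-extension of the `(2,1)`-De Bruijn graph) and left coproduct
`Δ̃` as given: `Δ̃` is coassociative, the entanglement equation `(Δ̃ ⊗ id)Δ = (id ⊗ Δ)Δ̃`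
holds, also `(Δ ⊗ id)Δ̃ = (id ⊗ Δ̃)Δ` (so `(F, Δ, Δ̃)` is achiral), and `ε̃` with
`ε̃(a) = ε̃(d) = 0`, `ε̃(b) = ε̃(c) = 1` is a counit for `Δ̃`. -/
theorem stmt9 (k F : Type*) [Field k] [AddCommGroup F] [Module k F]
    (bs : Module.Basis (Fin 4) k F)
    (a b c d : F) (hab : a = bs 0) (hbb : b = bs 1) (hcb : c = bs 2) (hdb : d = bs 3)
    (Δ Δ' : F →ₗ[k] F ⊗[k] F)
    (hΔa : Δ a = a ⊗ₜ[k] a + b ⊗ₜ[k] c)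
    (hΔb : Δ b = a ⊗ₜ[k] b + b ⊗ₜ[k] d)
    (hΔc : Δ c = d ⊗ₜ[k] c + c ⊗ₜ[k] a)
    (hΔd : Δ d = d ⊗ₜ[k] d + c ⊗ₜ[k] b)
    (hΔ'a : Δ' a = b ⊗ₜ[k] a + a ⊗ₜ[k] c)
    (hΔ'b : Δ' b = b ⊗ₜ[k] b + a ⊗ₜ[k] d)
    (hΔ'c : Δ' c = c ⊗ₜ[k] c + d ⊗ₜ[k] a)
    (hΔ'd : Δ' d = c ⊗ₜ[k] d + d ⊗ₜ[k] b)
    (ε' : F →ₗ[k] k)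
    (hεa : ε' a = 0) (hεd : ε' d = 0) (hεb : ε' b = 1) (hεc : ε' c = 1) :
    Coassoc Δ' ∧
    lcomp Δ' Δ = rcomp Δ Δ' ∧
    lcomp Δ Δ' = rcomp Δ' Δ ∧
    (TensorProduct.lid k F).toLinearMap ∘ₗ TensorProduct.map ε' LinearMap.id ∘ₗ Δ'
      = LinearMap.id ∧
    (TensorProduct.rid k F).toLinearMap ∘ₗ TensorProduct.map LinearMap.id ε' ∘ₗ Δ'
      = LinearMap.id := by
  set e := bs.reindex (finProdFinEquiv (m := 2) (n := 2)).symm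
  obtain ⟨rfl, rfl, rfl, rfl⟩ : a = e (0, 0) ∧ b = e (0, 1) ∧ c = e (1, 0) ∧ d = e (1, 1) := by
    simp only [e, Module.Basis.reindex_apply, Equiv.symm_symm, hab, hbb, hcb, hdb]
    exact ⟨rfl, rfl, rfl, rfl⟩
  have hΔ : IsMatrixComul e Δ := fun i j => by
    fin_cases i <;> fin_cases j <;> simp [Fin.sum_univ_two, hΔa, hΔb, hΔc, hΔd, add_comm]
  set σ := e.permCols (Equiv.swap 0 1)
  have hΔ' : Δ' = twist σ.toLinearMap Δ := e.ext fun ⟨i, j⟩ => by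
    fin_cases i <;> fin_cases j <;>
      simp [twist, σ, hΔ _ _, Fin.sum_univ_two, hΔ'a, hΔ'b, hΔ'c, hΔ'd, add_comm]
  have hε' : ε' = e.diagSum ∘ₗ σ.symm.toLinearMap := e.ext fun ⟨i, j⟩ => by
    fin_cases i <;> fin_cases j <;> simp [σ, hεa, hεb, hεc, hεd]
  subst hΔ' hε'
  have hσ := hΔ.comp_permCols (Equiv.swap 0 1)
  have hcoassoc := hΔ.coassoc
  exact ⟨hcoassoc.coassoc_twist hσ, hcoassoc.entanglement_twist _, hcoassoc.achiral_twist hσ,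
    lid_comp_map_twist σ hΔ.lid_comp_diagSum, rid_comp_map_twist σ hσ hΔ.rid_comp_diagSum⟩
end
end

section
/- Let k be a field and let V be the 3-dimensional k-vector space with basis {x, p, g}. Define linear maps Δ, Δ̃ : V → V ⊗ V by Δx = x⊗x, Δp = p⊗x, Δg = g⊗x, and Δ̃x = x⊗p + g⊗x, Δ̃p = p⊗p, Δ̃g = g⊗g. Then Δ and Δ̃ are coassociative and satisfy the entanglement equation (Δ̃ ⊗ id) ∘ Δ = (id ⊗ Δ) ∘ Δ̃. Moreover (Δ ⊗ id) ∘ Δ̃ ≠ (id ⊗ Δ̃) ∘ Δ, so this L-coalgebra is chiral. -/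
open TensorProduct

noncomputable section

variable {k V : Type*} [Field k] [AddCommGroup V] [Module k V]

/-!
`Δ` is right tensoring with the group-like `x`, i.e. `Δ v = v ⊗ x` for every `v`. For such a `Δ`
both `(Δ' ⊗ id) ∘ Δ` and `(id ⊗ Δ) ∘ Δ'` send `v` to `Δ' v ⊗ x`, whatever `Δ'` is; this gives the
entanglement equation and, with `Δ' = Δ`, coassociativity of `Δ`. In `Δ̃` the elements `p`, `g`
are group-like and `x` is `(g, p)`-skew-primitive, which makes `Δ̃` coassociative. At `x`,
`(Δ ⊗ id) Δ̃ x - (id ⊗ Δ̃) Δ x = g ⊗ x ⊗ x - x ⊗ g ⊗ x ≠ 0`.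
-/

theorem Module.Basis.ext_fin_three {R M N : Type*} [Semiring R] [AddCommMonoid M] [Module R M]
    [AddCommMonoid N] [Module R N] (b : Module.Basis (Fin 3) R M) {f f' : M →ₗ[R] N}
    (h0 : f (b 0) = f' (b 0)) (h1 : f (b 1) = f' (b 1)) (h2 : f (b 2) = f' (b 2)) : f = f' :=
  b.ext fun i => by fin_cases i <;> assumption

theorem Module.Basis.tmul_tmul_ne_tmul_tmul {ι : Type*} (b : Module.Basis ι k V) {i j : ι}
    (hij : i ≠ j) (l : ι) : b i ⊗ₜ[k] (b j ⊗ₜ[k] b l) ≠ b j ⊗ₜ[k] (b i ⊗ₜ[k] b l) := by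
  simpa only [Module.Basis.tensorProduct_apply] using
    (b.tensorProduct (b.tensorProduct b)).injective.ne (a₁ := (i, (j, l))) (a₂ := (j, (i, l)))
      (by simp [hij])

theorem lcomp_apply (Δ' Δ : V →ₗ[k] V ⊗[k] V) (v : V) :
    lcomp Δ' Δ v = TensorProduct.assoc k V V V (TensorProduct.map Δ' LinearMap.id (Δ v)) :=
  rfl

theorem rcomp_apply (Δ' Δ : V →ₗ[k] V ⊗[k] V) (v : V) :
    rcomp Δ' Δ v = TensorProduct.map LinearMap.id Δ' (Δ v) :=
  rfl

theorem lcomp_eq_rcomp_of_eq_tmul {Δ : V →ₗ[k] V ⊗[k] V} {e : V} (hΔ : ∀ v, Δ v = v ⊗ₜ[k] e)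
    (Δ' : V →ₗ[k] V ⊗[k] V) : lcomp Δ' Δ = rcomp Δ Δ' := by
  ext v
  rw [lcomp_apply, rcomp_apply, hΔ, map_tmul, LinearMap.id_apply]
  induction Δ' v using TensorProduct.induction_on with
  | zero => simp
  | tmul a b => simp [hΔ]
  | add s t hs ht => simp [add_tmul, hs, ht]

theorem lcomp_self_apply_eq_of_groupLike {Δ : V →ₗ[k] V ⊗[k] V} {a : V}
    (ha : Δ a = a ⊗ₜ[k] a) : lcomp Δ Δ a = rcomp Δ Δ a := by
  simp [lcomp_apply, rcomp_apply, ha]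

theorem lcomp_self_apply_eq_of_skewPrimitive {Δ : V →ₗ[k] V ⊗[k] V} {a b x : V}
    (ha : Δ a = a ⊗ₜ[k] a) (hb : Δ b = b ⊗ₜ[k] b) (hx : Δ x = x ⊗ₜ[k] b + a ⊗ₜ[k] x) :
    lcomp Δ Δ x = rcomp Δ Δ x := by
  simp only [lcomp_apply, rcomp_apply, hx, ha, hb, map_add, map_tmul, LinearMap.id_apply,
    add_tmul, tmul_add, TensorProduct.assoc_tmul]
  abel

theorem lcomp_ne_rcomp_of_skewPrimitive {Δ Δ' : V →ₗ[k] V ⊗[k] V} {x p g : V}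
    (hΔ : ∀ v, Δ v = v ⊗ₜ[k] x) (hΔ'x : Δ' x = x ⊗ₜ[k] p + g ⊗ₜ[k] x)
    (hgx : g ⊗ₜ[k] (x ⊗ₜ[k] x) ≠ x ⊗ₜ[k] (g ⊗ₜ[k] x)) : lcomp Δ Δ' ≠ rcomp Δ' Δ := by
  intro h
  have hx := LinearMap.congr_fun h x
  simp only [lcomp_apply, rcomp_apply, hΔ, hΔ'x, map_add, map_tmul, LinearMap.id_apply,
    tmul_add, TensorProduct.assoc_tmul, add_right_inj] at hx
  exact hgx hx

/-- On the 3-dimensional space with basis `{x, p, g}`, the coproducts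
`Δx = x⊗x`, `Δp = p⊗x`, `Δg = g⊗x` and `Δ̃x = x⊗p + g⊗x`, `Δ̃p = p⊗p`, `Δ̃g = g⊗g` are
coassociative and satisfy the entanglement equation `(Δ̃ ⊗ id)Δ = (id ⊗ Δ)Δ̃`, but
`(Δ ⊗ id)Δ̃ ≠ (id ⊗ Δ̃)Δ`: the `L`-coalgebra is chiral. -/
theorem stmt10 (k W : Type*) [Field k] [AddCommGroup W] [Module k W]
    (bs : Module.Basis (Fin 3) k W)
    (x p g : W) (hx : x = bs 0) (hp : p = bs 1) (hg : g = bs 2)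
    (Δ Δ' : W →ₗ[k] W ⊗[k] W)
    (hΔx : Δ x = x ⊗ₜ[k] x) (hΔp : Δ p = p ⊗ₜ[k] x) (hΔg : Δ g = g ⊗ₜ[k] x)
    (hΔ'x : Δ' x = x ⊗ₜ[k] p + g ⊗ₜ[k] x) (hΔ'p : Δ' p = p ⊗ₜ[k] p)
    (hΔ'g : Δ' g = g ⊗ₜ[k] g) :
    Coassoc Δ ∧ Coassoc Δ' ∧
    lcomp Δ' Δ = rcomp Δ Δ' ∧
    lcomp Δ Δ' ≠ rcomp Δ' Δ := by
  subst hx hp hg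
  have hΔ : ∀ v, Δ v = v ⊗ₜ[k] bs 0 :=
    LinearMap.congr_fun <|
      bs.ext_fin_three (f' := (TensorProduct.mk k W W).flip (bs 0)) hΔx hΔp hΔg
  exact ⟨lcomp_eq_rcomp_of_eq_tmul hΔ Δ,
    bs.ext_fin_three (lcomp_self_apply_eq_of_skewPrimitive hΔ'g hΔ'p hΔ'x)
      (lcomp_self_apply_eq_of_groupLike hΔ'p) (lcomp_self_apply_eq_of_groupLike hΔ'g),
    lcomp_eq_rcomp_of_eq_tmul hΔ Δ',
    lcomp_ne_rcomp_of_skewPrimitive hΔ hΔ'x (bs.tmul_tmul_ne_tmul_tmul (by decide) 0)⟩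
end
end

section
/- Let k be a field and q ∈ k nonzero. Let Sl_q(2) be the associative unital k-algebra with generators a, b, c, d and relations ba = q·ab, ca = q·ac, bc = cb, db = q·bd, dc = q·cd, ad − da = (q⁻¹ − q)·bc, and ad − q⁻¹·bc = 1. Define the left coproduct Δ̃ on the span of the generators by Δ̃a = b⊗a + a⊗c, Δ̃b = b⊗b + a⊗d, Δ̃c = c⊗c + d⊗a, Δ̃d = c⊗d + d⊗b, the left counit ε̃ by ε̃(a) = ε̃(d) = 0, ε̃(b) = ε̃(c) = 1, and the linear map S̃ sending a ↦ a, d ↦ d, b ↦ −q⁻¹·c, c ↦ −q·b. Then for each u ∈ {a, b, c, d}, m ∘ (id ⊗ S̃)(Δ̃u) = ε̃(u)·1 and m ∘ (S̃ ⊗ id)(Δ̃u) = ε̃(u)·1, where m denotes the multiplication of Sl_q(2). -/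
noncomputable section

namespace Stmt11

/-- Generators `a, b, c, d` of the free algebra `k⟨a, b, c, d⟩`. -/
def ga {k : Type*} [Field k] : FreeAlgebra k (Fin 4) := FreeAlgebra.ι k 0
def gb {k : Type*} [Field k] : FreeAlgebra k (Fin 4) := FreeAlgebra.ι k 1
def gc {k : Type*} [Field k] : FreeAlgebra k (Fin 4) := FreeAlgebra.ι k 2
def gd {k : Type*} [Field k] : FreeAlgebra k (Fin 4) := FreeAlgebra.ι k 3

/-- The defining relations of `Sl_q(2)`: `ba = q·ab`, `ca = q·ac`, `bc = cb`,
`db = q·bd`, `dc = q·cd`, `ad − da = (q⁻¹ − q)·bc`, and `ad − q⁻¹·bc = 1`. -/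
inductive SlRel (k : Type*) [Field k] (q : k) :
    FreeAlgebra k (Fin 4) → FreeAlgebra k (Fin 4) → Prop
  | rel1 : SlRel k q (gb * ga) (q • (ga * gb))
  | rel2 : SlRel k q (gc * ga) (q • (ga * gc))
  | rel3 : SlRel k q (gb * gc) (gc * gb)
  | rel4 : SlRel k q (gd * gb) (q • (gb * gd))
  | rel5 : SlRel k q (gd * gc) (q • (gc * gd))
  | rel6 : SlRel k q (ga * gd - gd * ga) ((q⁻¹ - q) • (gb * gc))
  | rel7 : SlRel k q (ga * gd - q⁻¹ • (gb * gc)) 1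

/-- In `Sl_q(2)` with the left coproduct `Δ̃a = b⊗a + a⊗c`,
`Δ̃b = b⊗b + a⊗d`, `Δ̃c = c⊗c + d⊗a`, `Δ̃d = c⊗d + d⊗b`, left counit
`ε̃(a) = ε̃(d) = 0`, `ε̃(b) = ε̃(c) = 1`, and the linear map `S̃` sending `a ↦ a`, `d ↦ d`,
`b ↦ −q⁻¹·c`, `c ↦ −q·b`, one has `m ∘ (id ⊗ S̃)(Δ̃u) = ε̃(u)·1` and
`m ∘ (S̃ ⊗ id)(Δ̃u) = ε̃(u)·1` for each generator `u ∈ {a, b, c, d}`. -/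
theorem stmt11 (k : Type*) [Field k] (q : k) (hq : q ≠ 0)
    (a b c d : RingQuot (SlRel k q))
    (ha : a = RingQuot.mkAlgHom k (SlRel k q) ga)
    (hb : b = RingQuot.mkAlgHom k (SlRel k q) gb)
    (hc : c = RingQuot.mkAlgHom k (SlRel k q) gc)
    (hd : d = RingQuot.mkAlgHom k (SlRel k q) gd)
    (Sa Sb Sc Sd : RingQuot (SlRel k q))
    (hSa : Sa = a) (hSd : Sd = d) (hSb : Sb = -(q⁻¹ • c)) (hSc : Sc = -(q • b)) :
    -- `m ∘ (id ⊗ S̃)(Δ̃u) = ε̃(u)·1` for `u = a, b, c, d`: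
    b * Sa + a * Sc = 0 ∧
    b * Sb + a * Sd = 1 ∧
    c * Sc + d * Sa = 1 ∧
    c * Sd + d * Sb = 0 ∧
    -- `m ∘ (S̃ ⊗ id)(Δ̃u) = ε̃(u)·1` for `u = a, b, c, d`:
    Sb * a + Sa * c = 0 ∧
    Sb * b + Sa * d = 1 ∧
    Sc * c + Sd * a = 1 ∧
    Sc * d + Sd * b = 0 := by
  have r1 : b * a = q • (a * b) := by
    rw [ha, hb, ← map_mul, ← map_mul, ← map_smul]
    exact RingQuot.mkAlgHom_rel k SlRel.rel1
  have r2 : c * a = q • (a * c) := by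
    rw [ha, hc, ← map_mul, ← map_mul, ← map_smul]
    exact RingQuot.mkAlgHom_rel k SlRel.rel2
  have r3 : b * c = c * b := by
    rw [hb, hc, ← map_mul, ← map_mul]
    exact RingQuot.mkAlgHom_rel k SlRel.rel3
  have r4 : d * b = q • (b * d) := by
    rw [hb, hd, ← map_mul, ← map_mul, ← map_smul]
    exact RingQuot.mkAlgHom_rel k SlRel.rel4
  have r5 : d * c = q • (c * d) := by
    rw [hc, hd, ← map_mul, ← map_mul, ← map_smul]
    exact RingQuot.mkAlgHom_rel k SlRel.rel5
  have r6 : a * d - d * a = (q⁻¹ - q) • (b * c) := by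
    rw [ha, hb, hc, hd, ← map_mul, ← map_mul, ← map_mul, ← map_sub, ← map_smul]
    exact RingQuot.mkAlgHom_rel k SlRel.rel6
  have r7 : a * d - q⁻¹ • (b * c) = 1 := by
    rw [ha, hb, hc, hd, ← map_mul, ← map_mul, ← map_smul, ← map_sub,
      ← map_one (RingQuot.mkAlgHom k (SlRel k q))]
    exact RingQuot.mkAlgHom_rel k SlRel.rel7
  have hqq : q⁻¹ * q = 1 := inv_mul_cancel₀ hq
  have emn : ∀ (x y : RingQuot (SlRel k q)) (r : k),
      x * -(r • y) = -(r • (x * y)) := fun x y r =>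
    (mul_neg x (r • y)).trans (congrArg Neg.neg (mul_smul_comm r x y))
  have enm : ∀ (x y : RingQuot (SlRel k q)) (r : k),
      -(r • x) * y = -(r • (x * y)) := fun x y r =>
    (neg_mul (r • x) y).trans (congrArg Neg.neg (smul_mul_assoc r x y))
  have hss : ∀ x : RingQuot (SlRel k q), q⁻¹ • (q • x) = x := fun x =>
    (smul_smul q⁻¹ q x).trans (by rw [hqq]; exact one_smul k x)
  have hda : d * a = 1 + q • (b * c) := by
    have h1 : a * d - d * a = q⁻¹ • (b * c) - q • (b * c) :=
      r6.trans (sub_smul q⁻¹ q (b * c))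
    have h3 : d * a = a * d - (a * d - d * a) := (sub_sub_cancel _ _).symm
    rw [h1] at h3
    have h4 : a * d - (q⁻¹ • (b * c) - q • (b * c)) =
        (a * d - q⁻¹ • (b * c)) + q • (b * c) := by module
    rw [h3, h4, r7]
  refine ⟨?_, ?_, ?_, ?_, ?_, ?_, ?_, ?_⟩
  · rw [hSa, hSc, r1, emn a b q]; module
  · rw [hSb, hSd, emn b c q⁻¹, ← r7]; module
  · rw [hSa, hSc, emn c b q, ← r3, hda]; module
  · rw [hSb, hSd, emn d c q⁻¹, r5, hss]; module
  · rw [hSa, hSb, enm c a q⁻¹, r2, hss]; module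
  · rw [hSa, hSb, enm c b q⁻¹, ← r3, ← r7]; module
  · rw [hSc, hSd, enm b c q, hda]; module
  · rw [hSc, hSd, enm b d q, r4]; module

end Stmt11
end
end

section
/- Let k be a field and q ∈ k nonzero. Let W be the 4-dimensional k-vector space with basis {a, c, a*, c*}. Define linear maps Δ₁, Δ̃₁ : W → W ⊗ W by Δ₁a = a⊗a − q·c*⊗c, Δ₁c = c⊗a + a*⊗c, Δ₁a* = a*⊗a* − q·c⊗c*, Δ₁c* = c*⊗a* + a⊗c*, and Δ̃₁a = c*⊗a + a⊗c, Δ̃₁c = c⊗c − q⁻¹·a*⊗a, Δ̃₁a* = c⊗a* + a*⊗c*, Δ̃₁c* = c*⊗c* − q⁻¹·a⊗a*. Then Δ̃₁ is coassociative, and both (Δ̃₁ ⊗ id) ∘ Δ₁ = (id ⊗ Δ₁) ∘ Δ̃₁ and (Δ₁ ⊗ id) ∘ Δ̃₁ = (id ⊗ Δ̃₁) ∘ Δ₁ hold; moreover the linear map ε̃₁ with ε̃₁(c) = ε̃₁(c*) = 1 and ε̃₁(a) = ε̃₁(a*) = 0 satisfies (ε̃₁ ⊗ id) ∘ Δ̃₁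 = id. Thus the left coalgebra (W, Δ̃₁) is achirally entangled to the usual coassociative coalgebra part (W, Δ₁) of SU_q(2). -/
open TensorProduct

noncomputable section

variable {k V : Type*} [Field k] [AddCommGroup V] [Module k V]

/-!
All four identities are linear in the argument, so it suffices to check them on the spanning
vectors `a, c, a*, c*`. There both sides expand into the same combination of pure triple tensors;
in the two entanglement identities this needs the cancellation `q • q⁻¹ • x = x`.
-/

open Submodule

/-- `Δ₁` of `SU_q(2)` on the generators `a, c, a*, c*`. -/
structure IsSUqCoproduct (q : k) (a c astar cstar : V) (Δ : V →ₗ[k] V ⊗[k] V) : Prop where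
  apply_a : Δ a = a ⊗ₜ[k] a - q • (cstar ⊗ₜ[k] c)
  apply_c : Δ c = c ⊗ₜ[k] a + astar ⊗ₜ[k] c
  apply_astar : Δ astar = astar ⊗ₜ[k] astar - q • (c ⊗ₜ[k] cstar)
  apply_cstar : Δ cstar = cstar ⊗ₜ[k] astar + a ⊗ₜ[k] cstar

/-- The left coproduct `Δ̃₁` of `SU_q(2)` on the generators `a, c, a*, c*`. -/
structure IsSUqLeftCoproduct (q : k) (a c astar cstar : V) (Δ : V →ₗ[k] V ⊗[k] V) : Prop where
  apply_a : Δ a = cstar ⊗ₜ[k] a + a ⊗ₜ[k] c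
  apply_c : Δ c = c ⊗ₜ[k] c - q⁻¹ • (astar ⊗ₜ[k] a)
  apply_astar : Δ astar = c ⊗ₜ[k] astar + astar ⊗ₜ[k] cstar
  apply_cstar : Δ cstar = cstar ⊗ₜ[k] cstar - q⁻¹ • (a ⊗ₜ[k] astar)

section

variable {q : k} {a c astar cstar : V} {Δ Δ' : V →ₗ[k] V ⊗[k] V}

theorem IsSUqLeftCoproduct.coassoc (hΔ' : IsSUqLeftCoproduct q a c astar cstar Δ')
    (hspan : span k {a, c, astar, cstar} = ⊤) : Coassoc Δ' := by
  obtain ⟨ha, hc, has, hcs⟩ := hΔ'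
  refine LinearMap.ext_on hspan ?_
  rintro _ (rfl | rfl | rfl | rfl) <;>
  · simp only [lcomp, rcomp, LinearMap.comp_apply, LinearEquiv.coe_coe, LinearMap.id_apply,
      ha, hc, has, hcs, map_add, map_sub, map_smul, map_tmul, assoc_tmul,
      tmul_add, tmul_sub, add_tmul, sub_tmul, tmul_smul, ← smul_tmul', smul_add]
    abel

theorem IsSUqLeftCoproduct.lcomp_eq_rcomp (hq : q ≠ 0)
    (hΔ' : IsSUqLeftCoproduct q a c astar cstar Δ') (hΔ : IsSUqCoproduct q a c astar cstar Δ)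
    (hspan : span k {a, c, astar, cstar} = ⊤) : lcomp Δ' Δ = rcomp Δ Δ' := by
  obtain ⟨ha', hc', has', hcs'⟩ := hΔ'
  obtain ⟨ha, hc, has, hcs⟩ := hΔ
  refine LinearMap.ext_on hspan ?_
  rintro _ (rfl | rfl | rfl | rfl) <;>
  · simp only [lcomp, rcomp, LinearMap.comp_apply, LinearEquiv.coe_coe, LinearMap.id_apply,
      ha, hc, has, hcs, ha', hc', has', hcs', map_add, map_sub, map_smul, map_tmul, assoc_tmul,
      tmul_add, tmul_sub, add_tmul, sub_tmul, tmul_smul, ← smul_tmul', smul_sub, smul_smul,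
      mul_inv_cancel₀ hq, inv_mul_cancel₀ hq, one_smul]
    abel

theorem IsSUqCoproduct.lcomp_eq_rcomp (hq : q ≠ 0)
    (hΔ : IsSUqCoproduct q a c astar cstar Δ) (hΔ' : IsSUqLeftCoproduct q a c astar cstar Δ')
    (hspan : span k {a, c, astar, cstar} = ⊤) : lcomp Δ Δ' = rcomp Δ' Δ := by
  obtain ⟨ha', hc', has', hcs'⟩ := hΔ'
  obtain ⟨ha, hc, has, hcs⟩ := hΔ
  refine LinearMap.ext_on hspan ?_
  rintro _ (rfl | rfl | rfl | rfl) <;>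
  · simp only [lcomp, rcomp, LinearMap.comp_apply, LinearEquiv.coe_coe, LinearMap.id_apply,
      ha, hc, has, hcs, ha', hc', has', hcs', map_add, map_sub, map_smul, map_tmul, assoc_tmul,
      tmul_add, tmul_sub, add_tmul, sub_tmul, tmul_smul, ← smul_tmul', smul_sub, smul_smul,
      mul_inv_cancel₀ hq, inv_mul_cancel₀ hq, one_smul]
    abel

theorem IsSUqLeftCoproduct.lid_comp_map_comp_eq_id
    (hΔ' : IsSUqLeftCoproduct q a c astar cstar Δ') (hspan : span k {a, c, astar, cstar} = ⊤)
    {ε : V →ₗ[k] k} (hεc : ε c = 1) (hεcs : ε cstar = 1) (hεa : ε a = 0) (hεas : ε astar = 0) :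
    (TensorProduct.lid k V).toLinearMap ∘ₗ TensorProduct.map ε LinearMap.id ∘ₗ Δ' =
      LinearMap.id := by
  obtain ⟨ha, hc, has, hcs⟩ := hΔ'
  refine LinearMap.ext_on hspan ?_
  rintro _ (rfl | rfl | rfl | rfl) <;>
    simp [ha, hc, has, hcs, hεc, hεcs, hεa, hεas]

end

/-- On the 4-dimensional space `W` with basis `{a, c, a*, c*}` carrying
the usual coproduct `Δ₁` of `SU_q(2)` and the left coproduct `Δ̃₁` as given: `Δ̃₁` is
coassociative, `(Δ̃₁ ⊗ id)Δ₁ = (id ⊗ Δ₁)Δ̃₁` and `(Δ₁ ⊗ id)Δ̃₁ = (id ⊗ Δ̃₁)Δ₁` (achiral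
entanglement), and `ε̃₁` with `ε̃₁(c) = ε̃₁(c*) = 1`, `ε̃₁(a) = ε̃₁(a*) = 0` is a left
counit for `Δ̃₁`. -/
theorem stmt12 (k W : Type*) [Field k] [AddCommGroup W] [Module k W]
    (q : k) (hq : q ≠ 0)
    (bs : Module.Basis (Fin 4) k W)
    (a c astar cstar : W)
    (ha : a = bs 0) (hc : c = bs 1) (has : astar = bs 2) (hcs : cstar = bs 3)
    (Δ₁ Δ₁' : W →ₗ[k] W ⊗[k] W)
    (hΔa : Δ₁ a = a ⊗ₜ[k] a - q • (cstar ⊗ₜ[k] c))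
    (hΔc : Δ₁ c = c ⊗ₜ[k] a + astar ⊗ₜ[k] c)
    (hΔas : Δ₁ astar = astar ⊗ₜ[k] astar - q • (c ⊗ₜ[k] cstar))
    (hΔcs : Δ₁ cstar = cstar ⊗ₜ[k] astar + a ⊗ₜ[k] cstar)
    (hΔ'a : Δ₁' a = cstar ⊗ₜ[k] a + a ⊗ₜ[k] c)
    (hΔ'c : Δ₁' c = c ⊗ₜ[k] c - q⁻¹ • (astar ⊗ₜ[k] a))
    (hΔ'as : Δ₁' astar = c ⊗ₜ[k] astar + astar ⊗ₜ[k] cstar)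
    (hΔ'cs : Δ₁' cstar = cstar ⊗ₜ[k] cstar - q⁻¹ • (a ⊗ₜ[k] astar))
    (ε' : W →ₗ[k] k)
    (hεc : ε' c = 1) (hεcs : ε' cstar = 1) (hεa : ε' a = 0) (hεas : ε' astar = 0) :
    Coassoc Δ₁' ∧
    lcomp Δ₁' Δ₁ = rcomp Δ₁ Δ₁' ∧
    lcomp Δ₁ Δ₁' = rcomp Δ₁' Δ₁ ∧
    (TensorProduct.lid k W).toLinearMap ∘ₗ TensorProduct.map ε' LinearMap.id ∘ₗ Δ₁'
      = LinearMap.id := by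
  have hspan : span k {a, c, astar, cstar} = ⊤ := by
    rw [ha, hc, has, hcs, ← bs.span_eq]
    congr
    ext
    simp [Fin.exists_fin_succ, eq_comm]
  have hΔ : IsSUqCoproduct q a c astar cstar Δ₁ := ⟨hΔa, hΔc, hΔas, hΔcs⟩
  have hΔ' : IsSUqLeftCoproduct q a c astar cstar Δ₁' := ⟨hΔ'a, hΔ'c, hΔ'as, hΔ'cs⟩
  exact ⟨hΔ'.coassoc hspan, hΔ'.lcomp_eq_rcomp hq hΔ hspan, hΔ.lcomp_eq_rcomp hq hΔ' hspan,
    hΔ'.lid_comp_map_comp_eq_id hspan hεc hεcs hεa hεas⟩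
end
end

section
/- Let k be a field, L a k-vector space, and Δ, Δ̃ : L → L ⊗ L linear maps such that (L, Δ, Δ̃) is an achiral coassociative L-coalgebra, i.e. Δ and Δ̃ are coassociative, (Δ̃ ⊗ id) ∘ Δ = (id ⊗ Δ) ∘ Δ̃, and (Δ ⊗ id) ∘ Δ̃ = (id ⊗ Δ̃) ∘ Δ. Then for any scalars u, v, w, z ∈ k, the maps Δ' := u·Δ + v·Δ̃ and Δ̃' := w·Δ + z·Δ̃ again satisfy all four axioms: Δ' and Δ̃' are coassociative, (Δ̃' ⊗ id) ∘ Δ' = (id ⊗ Δ') ∘ Δ̃', and (Δ' ⊗ id) ∘ Δ̃' = (id ⊗ Δ̃') ∘ Δ'. In particular, the coproduct u·Δ + v·Δ̃ is still coassociative. -/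
open TensorProduct

noncomputable section

variable {k V : Type*} [Field k] [AddCommGroup V] [Module k V]

lemma lcomp_add_left (a b c : V →ₗ[k] V ⊗[k] V) :
    lcomp (a + b) c = lcomp a c + lcomp b c := by
  unfold lcomp
  ext x
  simp [TensorProduct.map_add_left]

lemma lcomp_smul_left (s : k) (a c : V →ₗ[k] V ⊗[k] V) :
    lcomp (s • a) c = s • lcomp a c := by
  unfold lcomp
  ext x
  simp [TensorProduct.map_smul_left]

lemma lcomp_add_right (a b c : V →ₗ[k] V ⊗[k] V) :
    lcomp c (a + b) = lcomp c a + lcomp c b := by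
  unfold lcomp; ext x; simp

lemma lcomp_smul_right (s : k) (a c : V →ₗ[k] V ⊗[k] V) :
    lcomp c (s • a) = s • lcomp c a := by
  unfold lcomp; ext x; simp

lemma rcomp_add_left (a b c : V →ₗ[k] V ⊗[k] V) :
    rcomp (a + b) c = rcomp a c + rcomp b c := by
  unfold rcomp; ext x; simp [TensorProduct.map_add_right]

lemma rcomp_smul_left (s : k) (a c : V →ₗ[k] V ⊗[k] V) :
    rcomp (s • a) c = s • rcomp a c := by
  unfold rcomp; ext x; simp [TensorProduct.map_smul_right]

lemma rcomp_add_right (a b c : V →ₗ[k] V ⊗[k] V) :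
    rcomp c (a + b) = rcomp c a + rcomp c b := by
  unfold rcomp; ext x; simp

lemma rcomp_smul_right (s : k) (a c : V →ₗ[k] V ⊗[k] V) :
    rcomp c (s • a) = s • rcomp c a := by
  unfold rcomp; ext x; simp

/-- If `(L, Δ, Δ̃)` is an achiral coassociative `L`-coalgebra, then for any
scalars `u, v, w, z`, the coproducts `Δ' := u·Δ + v·Δ̃` and `Δ̃' := w·Δ + z·Δ̃` again
satisfy all four axioms; in particular `u·Δ + v·Δ̃` is still coassociative. -/
theorem stmt13 (k L : Type*) [Field k] [AddCommGroup L] [Module k L]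
    (Δ Δ' : L →ₗ[k] L ⊗[k] L)
    (h1 : Coassoc Δ) (h2 : Coassoc Δ')
    (h3 : lcomp Δ' Δ = rcomp Δ Δ') (h4 : lcomp Δ Δ' = rcomp Δ' Δ)
    (u v w z : k) :
    Coassoc (u • Δ + v • Δ') ∧
    Coassoc (w • Δ + z • Δ') ∧
    lcomp (w • Δ + z • Δ') (u • Δ + v • Δ') = rcomp (u • Δ + v • Δ') (w • Δ + z • Δ') ∧
    lcomp (u • Δ + v • Δ') (w • Δ + z • Δ') = rcomp (w • Δ + z • Δ') (u • Δ + v • Δ') := by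
  unfold Coassoc at *
  simp only [lcomp_add_left, lcomp_add_right, lcomp_smul_left, lcomp_smul_right,
    rcomp_add_left, rcomp_add_right, rcomp_smul_left, rcomp_smul_right,
    h1, h2, h3, h4]
  refine ⟨?_, ?_, ?_, ?_⟩ <;> module
end
end

section
/- Fix n ≥ 1 and a field k. Let F_n be the n²-dimensional k-vector space with basis {U_{ij} : i, j ∈ ℤ/nℤ}, and for each α ∈ ℤ/nℤ define the linear map Δ_{[α]} : F_n → F_n ⊗ F_n by Δ_{[α]}(U_{ij}) = Σ_{k ∈ ℤ/nℤ} U_{i,k+α} ⊗ U_{k,j}. Then: (1) each Δ_{[α]} is coassociative; (2) for all α, β ∈ ℤ/nℤ, the entanglement equation (Δ_{[α]} ⊗ id) ∘ Δ_{[β]} = (id ⊗ Δ_{[β]}) ∘ Δ_{[α]} holds; and (3) the linear map ε_{[α]} : F_n → k with ε_{[α]}(U_{ij}) = 1 if j = i + α and 0 otherwise satisfies (id ⊗ ε_{[α]}) ∘ Δ_{[α]} = id. -/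
/-
Both sides of the entanglement equation send `U i j` to the same double sum
`∑ l, ∑ m, U i (σ m) ⊗ U m (τ l) ⊗ U l j`, taken in the two orders; this needs nothing about the
column relabellings `σ, τ`, and coassociativity is the case `σ = τ`. For the counit, `ε` picks out
of `∑ l, U i (σ l) ⊗ U l j` the single term with `σ l = j`, which exists and is unique because the
shift `σ = (· + α)` is a bijection.
-/

open TensorProduct

noncomputable section

variable {k V : Type*} [Field k] [AddCommGroup V] [Module k V]

section ColumnRelabelledCoproduct

variable {ι : Type*} [Fintype ι] (U : Module.Basis (ι × ι) k V)

theorem lcomp_eq_rcomp_of_basis {σ τ : ι → ι} {Δσ Δτ : V →ₗ[k] V ⊗[k] V}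
    (hσ : ∀ i j, Δσ (U (i, j)) = ∑ l, U (i, σ l) ⊗ₜ[k] U (l, j))
    (hτ : ∀ i j, Δτ (U (i, j)) = ∑ l, U (i, τ l) ⊗ₜ[k] U (l, j)) :
    lcomp Δσ Δτ = rcomp Δτ Δσ := by
  refine U.ext fun ⟨i, j⟩ => ?_
  simp only [lcomp, rcomp, LinearMap.comp_apply, hσ, hτ, map_sum, map_tmul, LinearMap.id_apply,
    LinearEquiv.coe_coe, sum_tmul, tmul_sum, assoc_tmul]
  exact Finset.sum_comm

theorem coassoc_of_basis {σ : ι → ι} {Δ : V →ₗ[k] V ⊗[k] V}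
    (hΔ : ∀ i j, Δ (U (i, j)) = ∑ l, U (i, σ l) ⊗ₜ[k] U (l, j)) :
    Coassoc Δ :=
  lcomp_eq_rcomp_of_basis U hΔ hΔ

end ColumnRelabelledCoproduct

theorem rid_comp_map_counit_comp_eq_id_of_basis {ι R M : Type*} [Fintype ι] [DecidableEq ι]
    [CommSemiring R] [AddCommMonoid M] [Module R M] (U : Module.Basis (ι × ι) R M) (σ : ι ≃ ι)
    {Δ : M →ₗ[R] M ⊗[R] M} (hΔ : ∀ i j, Δ (U (i, j)) = ∑ l, U (i, σ l) ⊗ₜ[R] U (l, j))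
    {ε : M →ₗ[R] R} (hε : ∀ i j, ε (U (i, j)) = if j = σ i then 1 else 0) :
    (TensorProduct.rid R M).toLinearMap ∘ₗ TensorProduct.map LinearMap.id ε ∘ₗ Δ =
      LinearMap.id := by
  refine U.ext fun ⟨i, j⟩ => ?_
  simp only [LinearMap.comp_apply, hΔ, map_sum, map_tmul, LinearMap.id_apply,
    LinearEquiv.coe_coe, rid_tmul, hε]
  rw [Finset.sum_eq_single (σ.symm j)]
  · simp
  · intro l _ hl
    rw [if_neg (fun h => hl (by rw [h, Equiv.symm_apply_apply])), zero_smul]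
  · simp

theorem stmt15_general (n : ℕ) [NeZero n]
    (k F : Type*) [Field k] [AddCommGroup F] [Module k F]
    (U : Module.Basis (ZMod n × ZMod n) k F)
    (Δ : ZMod n → (F →ₗ[k] F ⊗[k] F))
    (hΔ : ∀ α i j, Δ α (U (i, j)) = ∑ l : ZMod n, U (i, l + α) ⊗ₜ[k] U (l, j))
    (ε : ZMod n → (F →ₗ[k] k))
    (hε : ∀ α i j, ε α (U (i, j)) = if j = i + α then 1 else 0) :
    (∀ α, Coassoc (Δ α)) ∧
    (∀ α β, lcomp (Δ α) (Δ β) = rcomp (Δ β) (Δ α)) ∧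
    (∀ α, (TensorProduct.rid k F).toLinearMap ∘ₗ
      TensorProduct.map LinearMap.id (ε α) ∘ₗ Δ α = LinearMap.id) :=
  ⟨fun α => coassoc_of_basis U (hΔ α),
    fun α β => lcomp_eq_rcomp_of_basis U (hΔ α) (hΔ β),
    fun α => rid_comp_map_counit_comp_eq_id_of_basis U (Equiv.addRight α) (hΔ α) (hε α)⟩

/-- On `F_n` with basis `{U_{ij} : i, j ∈ ℤ/nℤ}` and coproducts
`Δ_{[α]}(U_{ij}) = Σ_l U_{i,l+α} ⊗ U_{l,j}`: each `Δ_{[α]}` is coassociative, any two of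
them satisfy the entanglement equation `(Δ_{[α]} ⊗ id)Δ_{[β]} = (id ⊗ Δ_{[β]})Δ_{[α]}`,
and `ε_{[α]}(U_{ij}) = δ_{j, i+α}` is a right counit for `Δ_{[α]}`. -/
theorem stmt15 (n : ℕ) (hn : 1 ≤ n) [NeZero n]
    (k F : Type*) [Field k] [AddCommGroup F] [Module k F]
    (U : Module.Basis (ZMod n × ZMod n) k F)
    (Δ : ZMod n → (F →ₗ[k] F ⊗[k] F))
    (hΔ : ∀ α i j, Δ α (U (i, j)) = ∑ l : ZMod n, U (i, l + α) ⊗ₜ[k] U (l, j))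
    (ε : ZMod n → (F →ₗ[k] k))
    (hε : ∀ α i j, ε α (U (i, j)) = if j = i + α then 1 else 0) :
    (∀ α, Coassoc (Δ α)) ∧
    (∀ α β, lcomp (Δ α) (Δ β) = rcomp (Δ β) (Δ α)) ∧
    (∀ α, (TensorProduct.rid k F).toLinearMap ∘ₗ
      TensorProduct.map LinearMap.id (ε α) ∘ₗ Δ α = LinearMap.id) :=
  stmt15_general n k F U Δ hΔ ε hε
end
end

section
/- Fix n ≥ 1. For each α ∈ ℤ/nℤ, let S_α ⊆ ((ℤ/nℤ × ℤ/nℤ) × (ℤ/nℤ × ℤ/nℤ)) be the arrow set of the geometric support of (F_n, Δ_{[α]}), namely S_α = { ((i,k), (l,j)) : k = l + α }. Then the sets S_α, α ∈ ℤ/nℤ, are pairwise disjoint (S_α ∩ S_β = ∅ for α ≠ β) and their union is all of (ℤ/nℤ × ℤ/nℤ) × (ℤ/nℤ × ℤ/nℤ), i.e. the arrow set of the (n²,1)-De Bruijn graph (the complete directed graph with a loop at every vertex on the n² vertices U_{ij}). Hence the (n²,1)-De Bruijn graph is tiled by the geometric supports of the n coassociative coalgebras (F_n, Δ_{[α]}).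 -/
/-- The arrow sets `S_α = { ((i,k), (l,j)) : k = l + α }`, `α ∈ ℤ/nℤ`, of
the geometric supports of the coalgebras `(F_n, Δ_{[α]})` are pairwise disjoint and their
union is the full arrow set of the `(n²,1)`-De Bruijn graph (all ordered pairs of
vertices): the `(n²,1)`-De Bruijn graph is tiled by these `n` geometric supports. -/
theorem stmt16 (n : ℕ) (hn : 1 ≤ n)
    (S : ZMod n → Set ((ZMod n × ZMod n) × (ZMod n × ZMod n)))
    (hS : ∀ α, S α = {p | p.1.2 = p.2.1 + α}) :
    (∀ α β, α ≠ β → S α ∩ S β = ∅) ∧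
    (⋃ α, S α) = Set.univ := by
  constructor
  · intro α β hab
    ext p
    simp only [hS, Set.mem_inter_iff, Set.mem_setOf_eq, Set.mem_empty_iff_false, iff_false]
    rintro ⟨h1, h2⟩
    exact hab (add_left_cancel (h1.symm.trans h2))
  · ext p
    simp only [Set.mem_iUnion, hS, Set.mem_setOf_eq, Set.mem_univ, iff_true]
    exact ⟨p.1.2 - p.2.1, by ring⟩
end

section
/- Let k be a field, C a k-vector space, and Δ₀, …, Δ_{n−1} : C → C ⊗ C linear maps satisfying the pairwise entanglement relations (Δᵢ ⊗ id) ∘ Δⱼ = (id ⊗ Δⱼ) ∘ Δᵢ for all i, j ∈ {0, …, n−1}. Let Z ∈ M_n(k) be any n × n matrix and define Δ'ᵢ := Σ_{j=0}^{n−1} Z_{ij}·Δⱼ. Then the new maps again satisfy (Δ'ᵢ ⊗ id) ∘ Δ'ⱼ = (id ⊗ Δ'ⱼ) ∘ Δ'ᵢ for all i, j ∈ {0, …, n−1}. In particular each Δ'ᵢ is coassociative, so this produces splittings of coassociative coproducts into several coassociative ones. -/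
open TensorProduct

noncomputable section

variable {k V : Type*} [Field k] [AddCommGroup V] [Module k V]

lemma map_id_sum {n : ℕ} (c : Fin n → k) (f : Fin n → (V →ₗ[k] V ⊗[k] V)) :
    TensorProduct.map (∑ j, c j • f j) (LinearMap.id : V →ₗ[k] V)
      = ∑ j, c j • TensorProduct.map (f j) LinearMap.id := by
  have : ∀ g : V →ₗ[k] V ⊗[k] V, TensorProduct.map g (LinearMap.id : V →ₗ[k] V)
      = (LinearMap.rTensorHom (R := k) V : (V →ₗ[k] V ⊗[k] V) →ₗ[k] _) g := fun _ => rfl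
  simp only [this, map_sum, map_smul]

lemma id_map_sum {n : ℕ} (c : Fin n → k) (f : Fin n → (V →ₗ[k] V ⊗[k] V)) :
    TensorProduct.map (LinearMap.id : V →ₗ[k] V) (∑ j, c j • f j)
      = ∑ j, c j • TensorProduct.map LinearMap.id (f j) := by
  have : ∀ g : V →ₗ[k] V ⊗[k] V, TensorProduct.map (LinearMap.id : V →ₗ[k] V) g
      = (LinearMap.lTensorHom (R := k) V : (V →ₗ[k] V ⊗[k] V) →ₗ[k] _) g := fun _ => rfl
  simp only [this, map_sum, map_smul]

lemma lcomp_sum1 {n : ℕ} (c : Fin n → k) (f : Fin n → (V →ₗ[k] V ⊗[k] V)) (B : V →ₗ[k] V ⊗[k] V) :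
    lcomp (∑ j, c j • f j) B = ∑ j, c j • lcomp (f j) B := by
  ext x
  simp [lcomp, map_id_sum, LinearMap.sum_apply]

lemma lcomp_sum2 {n : ℕ} (c : Fin n → k) (f : Fin n → (V →ₗ[k] V ⊗[k] V)) (B : V →ₗ[k] V ⊗[k] V) :
    lcomp B (∑ j, c j • f j) = ∑ j, c j • lcomp B (f j) := by
  ext x
  simp [lcomp, map_sum, LinearMap.sum_apply]

lemma rcomp_sum1 {n : ℕ} (c : Fin n → k) (f : Fin n → (V →ₗ[k] V ⊗[k] V)) (B : V →ₗ[k] V ⊗[k] V) :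
    rcomp (∑ j, c j • f j) B = ∑ j, c j • rcomp (f j) B := by
  ext x
  simp [rcomp, id_map_sum, LinearMap.sum_apply]

lemma rcomp_sum2 {n : ℕ} (c : Fin n → k) (f : Fin n → (V →ₗ[k] V ⊗[k] V)) (B : V →ₗ[k] V ⊗[k] V) :
    rcomp B (∑ j, c j • f j) = ∑ j, c j • rcomp B (f j) := by
  ext x
  simp [rcomp, map_sum, LinearMap.sum_apply]


/-- If the coproducts `Δ₀, …, Δ_{n−1} : C → C ⊗ C` satisfy the pairwise
entanglement relations `(Δᵢ ⊗ id) ∘ Δⱼ = (id ⊗ Δⱼ) ∘ Δᵢ`, then for any matrix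
`Z ∈ M_n(k)` the maps `Δ'ᵢ := Σⱼ Z_{ij}·Δⱼ` satisfy the same relations; in particular
each `Δ'ᵢ` is coassociative. -/
theorem stmt17 (n : ℕ) (k C : Type*) [Field k] [AddCommGroup C] [Module k C]
    (Δ : Fin n → (C →ₗ[k] C ⊗[k] C))
    (hΔ : ∀ i j, lcomp (Δ i) (Δ j) = rcomp (Δ j) (Δ i))
    (Z : Matrix (Fin n) (Fin n) k)
    (Δ' : Fin n → (C →ₗ[k] C ⊗[k] C))
    (hΔ' : ∀ i, Δ' i = ∑ j, Z i j • Δ j) :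
    ∀ i j, lcomp (Δ' i) (Δ' j) = rcomp (Δ' j) (Δ' i) := by
  intro i j
  rw [hΔ' i, hΔ' j, lcomp_sum1, rcomp_sum1]
  simp only [lcomp_sum2, rcomp_sum2, Finset.smul_sum]
  rw [Finset.sum_comm]
  exact Finset.sum_congr rfl fun a _ => Finset.sum_congr rfl fun b _ => by
    rw [hΔ b a, smul_comm]
end
end

section
/- Let k be a field and let F be the 4-dimensional k-vector space with basis {a, b, c, d}, with left coproduct Δ̃ given by Δ̃a = b⊗a + a⊗c, Δ̃b = b⊗b + a⊗d, Δ̃c = c⊗c + d⊗a, Δ̃d = c⊗d + d⊗b. Define the linear map D : F → F by D(a) = c − b, D(d) = b − c, D(b) = d − a, D(c) = a − d. Then D is a Leibniz coderivation with respect to Δ̃: Δ̃ ∘ D = (id ⊗ D) ∘ Δ̃ + (D ⊗ id) ∘ Δ̃. (The same map D is also a coderivation with respect to the right coproduct Δ of F given by Δa = a⊗a + b⊗c, Δb = a⊗b + b⊗d, Δc = d⊗c + c⊗a, Δd = d⊗d + c⊗b.) -/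
open TensorProduct

noncomputable section

variable {k V : Type*} [Field k] [AddCommGroup V] [Module k V]

namespace LinearMap

variable {R M : Type*} [CommSemiring R] [AddCommMonoid M] [Module R M]

def IsCoderivation (Δ : M →ₗ[R] M ⊗[R] M) (D : M →ₗ[R] M) : Prop :=
  Δ ∘ₗ D = map id D ∘ₗ Δ + map D id ∘ₗ Δ

theorem IsCoderivation.of_span {Δ : M →ₗ[R] M ⊗[R] M} {D : M →ₗ[R] M} {s : Set M}
    (hs : Submodule.span R s = ⊤) (h : ∀ x ∈ s, Δ (D x) = map id D (Δ x) + map D id (Δ x)) :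
    IsCoderivation Δ D :=
  ext_on hs h

end LinearMap

open LinearMap

theorem Module.Basis.span_fin_four {R M : Type*} [Semiring R] [AddCommMonoid M] [Module R M]
    (bs : Module.Basis (Fin 4) R M) : Submodule.span R {bs 0, bs 1, bs 2, bs 3} = ⊤ := by
  rw [← bs.span_eq]
  congr
  ext x
  simp [Fin.exists_fin_succ, eq_comm]

section FourDimensional

variable {R M : Type*} [CommRing R] [AddCommGroup M] [Module R M] {a b c d : M}
  {D : M →ₗ[R] M}

theorem leibniz_left_coproduct {Δ' : M →ₗ[R] M ⊗[R] M}
    (hΔ'a : Δ' a = b ⊗ₜ a + a ⊗ₜ c) (hΔ'b : Δ' b = b ⊗ₜ b + a ⊗ₜ d)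
    (hΔ'c : Δ' c = c ⊗ₜ c + d ⊗ₜ a) (hΔ'd : Δ' d = c ⊗ₜ d + d ⊗ₜ b)
    (hDa : D a = c - b) (hDd : D d = b - c) (hDb : D b = d - a) (hDc : D c = a - d) :
    ∀ x ∈ ({a, b, c, d} : Set M), Δ' (D x) = map id D (Δ' x) + map D id (Δ' x) := by
  rintro x (rfl | rfl | rfl | rfl) <;>
    simp only [hDa, hDb, hDc, hDd, hΔ'a, hΔ'b, hΔ'c, hΔ'd, map_sub, map_add, map_tmul, id_apply,
      tmul_sub, sub_tmul] <;>
    abel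

theorem leibniz_right_coproduct {Δ : M →ₗ[R] M ⊗[R] M}
    (hΔa : Δ a = a ⊗ₜ a + b ⊗ₜ c) (hΔb : Δ b = a ⊗ₜ b + b ⊗ₜ d)
    (hΔc : Δ c = d ⊗ₜ c + c ⊗ₜ a) (hΔd : Δ d = d ⊗ₜ d + c ⊗ₜ b)
    (hDa : D a = c - b) (hDd : D d = b - c) (hDb : D b = d - a) (hDc : D c = a - d) :
    ∀ x ∈ ({a, b, c, d} : Set M), Δ (D x) = map id D (Δ x) + map D id (Δ x) := by
  rintro x (rfl | rfl | rfl | rfl) <;>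
    simp only [hDa, hDb, hDc, hDd, hΔa, hΔb, hΔc, hΔd, map_sub, map_add, map_tmul, id_apply,
      tmul_sub, sub_tmul] <;>
    abel

end FourDimensional

/-- On the 4-dimensional space `F` with basis `{a, b, c, d}`, the map `D`
with `D(a) = c − b`, `D(d) = b − c`, `D(b) = d − a`, `D(c) = a − d` is a Leibniz
coderivation with respect to the left coproduct `Δ̃` of `F`, and also with respect to
its right coproduct `Δ`. -/
theorem stmt19 (k F : Type*) [Field k] [AddCommGroup F] [Module k F]
    (bs : Module.Basis (Fin 4) k F)
    (a b c d : F) (hab : a = bs 0) (hbb : b = bs 1) (hcb : c = bs 2) (hdb : d = bs 3)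
    (Δ Δ' : F →ₗ[k] F ⊗[k] F)
    (hΔa : Δ a = a ⊗ₜ[k] a + b ⊗ₜ[k] c)
    (hΔb : Δ b = a ⊗ₜ[k] b + b ⊗ₜ[k] d)
    (hΔc : Δ c = d ⊗ₜ[k] c + c ⊗ₜ[k] a)
    (hΔd : Δ d = d ⊗ₜ[k] d + c ⊗ₜ[k] b)
    (hΔ'a : Δ' a = b ⊗ₜ[k] a + a ⊗ₜ[k] c)
    (hΔ'b : Δ' b = b ⊗ₜ[k] b + a ⊗ₜ[k] d)
    (hΔ'c : Δ' c = c ⊗ₜ[k] c + d ⊗ₜ[k] a)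
    (hΔ'd : Δ' d = c ⊗ₜ[k] d + d ⊗ₜ[k] b)
    (D : F →ₗ[k] F)
    (hDa : D a = c - b) (hDd : D d = b - c) (hDb : D b = d - a) (hDc : D c = a - d) :
    Δ' ∘ₗ D = TensorProduct.map LinearMap.id D ∘ₗ Δ' + TensorProduct.map D LinearMap.id ∘ₗ Δ' ∧
    Δ ∘ₗ D = TensorProduct.map LinearMap.id D ∘ₗ Δ + TensorProduct.map D LinearMap.id ∘ₗ Δ := by
  have hspan : Submodule.span k {a, b, c, d} = ⊤ := by
    rw [hab, hbb, hcb, hdb]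
    exact bs.span_fin_four
  exact ⟨IsCoderivation.of_span hspan (leibniz_left_coproduct hΔ'a hΔ'b hΔ'c hΔ'd hDa hDd hDb hDc),
    IsCoderivation.of_span hspan (leibniz_right_coproduct hΔa hΔb hΔc hΔd hDa hDd hDb hDc)⟩
end
end
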